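/- Let d = 2, b > a ≥ 1, 0 < l ≤ b, and suppose a + l > b. Then: (i) if b² − 4al < 0 then h(T_{M(a,b;l)}) > log b; (ii) if b² − 4al > 0 and b² − 2al − 2a² < 0 then h(T_{M(a,b;l)}) > log b; (iii) if b² − 4al > 0 and b² − 2al − 2a² ≥ 0 then h(T_{M(a,b;l)}) = log b; (iv) if b² − 4al = 0 and a ≤ l then h(T_{M(a,b;l)}) = log b; (v) if b² − 4al = 0 and a > l then h(T_{M(a,b;l)}) > log b. -/

import Mathlib

open Filter Real

/-- `treeP d M n i` = number of `n`-blocks of the hom Markov tree-shift `T_M`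
on the `d`-tree whose root label is `i`. -/
def treeP (d : ℕ) {ι : Type} [Fintype ι] (M : Matrix ι ι ℕ) : ℕ → ι → ℕ
  | 0, _ => 1
  | n + 1, i => (∑ j, M i j * treeP d M n j) ^ d

/-- `|Δ_n| = 1 + d + ⋯ + d^n`. -/
def deltaCard (d n : ℕ) : ℕ := ∑ i ∈ Finset.range (n + 1), d ^ i

/-- Topological entropy of the hom Markov tree-shift `T_M` on the `d`-tree. -/
noncomputable def treeEntropy (d : ℕ) {ι : Type} [Fintype ι] (M : Matrix ι ι ℕ) : ℝ :=
  Filter.limsup (fun n => Real.log (∑ i, treeP d M n i) / (deltaCard d n : ℝ)) Filter.atTop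

/-- `M` has entries in `{0,1}`. -/
def IsBinary {ι : Type} [Fintype ι] (M : Matrix ι ι ℕ) : Prop := ∀ i j, M i j ≤ 1

/-- `M` is irreducible. -/
def MatIrreducible {ι : Type} [Fintype ι] [DecidableEq ι] (M : Matrix ι ι ℕ) : Prop :=
  ∀ i j, ∃ n, 1 ≤ n ∧ 0 < (M ^ n) i j

/-- `M` is the block matrix `[[E_a, R],[O, E_b]]` with `R` binary of constant row sum `l`. -/
def IsMabl (a b l : ℕ) (M : Matrix (Fin (a + b)) (Fin (a + b)) ℕ) : Prop :=
  (∀ i j, M i j ≤ 1) ∧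
  (∀ i j : Fin (a + b), (i : ℕ) < a → (j : ℕ) < a → M i j = 1) ∧
  (∀ i j : Fin (a + b), a ≤ (i : ℕ) → a ≤ (j : ℕ) → M i j = 1) ∧
  (∀ i j : Fin (a + b), a ≤ (i : ℕ) → (j : ℕ) < a → M i j = 0) ∧
  (∀ i : Fin (a + b), (i : ℕ) < a → (∑ j : Fin (a + b), if a ≤ (j : ℕ) then M i j else 0) = l)


/-!
By induction on `n`, a label of the `E_b` block roots `b ^ (|Δ_n| - 1)` blocks and a label of
the `E_a` block roots `b ^ (|Δ_n| - 1) * x_n` blocks, where `x_0 = 1` and `x_{n+1} = g (x_n)` with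
`g x = ((a x + l) / b)²`. Hence `log p(n) / |Δ_n| = log b + log (1 + a x_n / b) / |Δ_n|`, and
the entropy is `log b` as soon as the orbit `(x_n)` is bounded. If the orbit is unbounded, then
`z_n = (a / b)² x_n` eventually exceeds `1` and from then on at least squares at each step, so
`log (1 + a x_n / b) ≥ log z_n` grows like `2 ^ n`, which is the growth rate of `|Δ_n|`: the
entropy exceeds `log b`.

Boundedness of the orbit of `1` is read off the quadratic `g x - x`: its discriminant has the
sign of `b² - 4al`, its vertex lies at `(b² - 2al) / (2a²)`, and `g 1 > 1` because `a + l > b`.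
If the roots are real and the vertex `X` is at least `1`, then `g X ≤ X` and monotonicity of `g`
keeps the orbit below `X`; otherwise `g x - x` is bounded below by a positive constant on
`[1, ∞)`.
-/

open Topology

section TreeShift

variable {d : ℕ} {ι : Type} [Fintype ι] {M : Matrix ι ι ℕ}

lemma deltaCard_succ (d n : ℕ) : deltaCard d (n + 1) = d * deltaCard d n + 1 := by
  rw [deltaCard, Finset.sum_range_succ', deltaCard, Finset.mul_sum]
  simp [pow_succ']

lemma deltaCard_pos (d n : ℕ) : 0 < deltaCard d n := by
  rw [deltaCard, Finset.sum_range_succ']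
  simp

lemma deltaCard_two_add_one (n : ℕ) : deltaCard 2 n + 1 = 2 ^ (n + 1) := by
  induction n with
  | zero => rfl
  | succ n ih => rw [deltaCard_succ, pow_succ, ← ih]; ring

lemma lt_deltaCard (hd : 1 ≤ d) (n : ℕ) : n < deltaCard d n := by
  induction n with
  | zero => exact deltaCard_pos d 0
  | succ n ih => rw [deltaCard_succ]; nlinarith

lemma tendsto_deltaCard (hd : 1 ≤ d) : Tendsto (fun n => (deltaCard d n : ℝ)) atTop atTop :=
  tendsto_natCast_atTop_atTop.comp <|
    tendsto_atTop_mono (fun n => (lt_deltaCard hd n).le) tendsto_id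

lemma treeP_le_card_pow (hM : IsBinary M) (n : ℕ) (i : ι) :
    treeP d M n i ≤ Fintype.card ι ^ (deltaCard d n - 1) := by
  induction n generalizing i with
  | zero => simp [treeP, deltaCard]
  | succ n ih =>
    obtain ⟨D, hD⟩ := Nat.exists_eq_add_one_of_ne_zero (deltaCard_pos d n).ne'
    rw [treeP, deltaCard_succ, Nat.add_sub_cancel, pow_mul', hD]
    gcongr
    calc ∑ j, M i j * treeP d M n j ≤ ∑ _j : ι, 1 * Fintype.card ι ^ D :=
          Finset.sum_le_sum fun j _ => Nat.mul_le_mul (hM i j) (by simpa [hD] using ih j)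
      _ = Fintype.card ι ^ (D + 1) := by simp [pow_succ']

lemma sum_treeP_le_card_pow (hM : IsBinary M) (n : ℕ) :
    ∑ i, treeP d M n i ≤ Fintype.card ι ^ deltaCard d n :=
  calc ∑ i, treeP d M n i ≤ ∑ _i : ι, Fintype.card ι ^ (deltaCard d n - 1) :=
        Finset.sum_le_sum fun i _ => treeP_le_card_pow hM n i
    _ = Fintype.card ι ^ deltaCard d n := by
        rw [Finset.sum_const, Finset.card_univ, smul_eq_mul, ← pow_succ',
          Nat.sub_add_cancel (deltaCard_pos d n)]

lemma isBoundedUnder_le_log_sum_treeP_div (hM : IsBinary M) :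
    IsBoundedUnder (· ≤ ·) atTop
      (fun n => Real.log (∑ i, treeP d M n i) / (deltaCard d n : ℝ)) := by
  refine isBoundedUnder_of ⟨Real.log (Fintype.card ι), fun n => ?_⟩
  have hD : (0 : ℝ) < deltaCard d n := by exact_mod_cast deltaCard_pos d n
  rw [div_le_iff₀ hD, mul_comm, ← Real.log_pow, ← Nat.cast_sum, ← Nat.cast_pow]
  rcases (∑ i, treeP d M n i).eq_zero_or_pos with h | h
  · rw [h, Nat.cast_zero, Real.log_zero]
    exact Real.log_natCast_nonneg _
  · exact Real.log_le_log (by exact_mod_cast h) (by exact_mod_cast sum_treeP_le_card_pow hM n)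

end TreeShift

lemma not_bddAbove_range_iterate {g : ℝ → ℝ} {x₀ δ : ℝ} (hδ : 0 < δ)
    (hg : ∀ x, x₀ ≤ x → x + δ ≤ g x) : ¬BddAbove (Set.range fun n => g^[n] x₀) := by
  have hgrow : ∀ n : ℕ, x₀ + n * δ ≤ g^[n] x₀ := by
    intro n
    induction n with
    | zero => simp
    | succ n ih =>
      rw [Function.iterate_succ_apply']
      have := hg _ (le_trans (le_add_of_nonneg_right (by positivity)) ih)
      push_cast
      linarith
  rw [not_bddAbove_iff]
  intro C
  obtain ⟨n, hn⟩ := exists_nat_gt ((C - x₀) / δ)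
  refine ⟨_, Set.mem_range_self n, ?_⟩
  have := hgrow n
  rw [div_lt_iff₀ hδ] at hn
  linarith

lemma pow_two_pow_le_of_sq_le_succ {z : ℕ → ℝ} {N : ℕ} (hz : ∀ n, z n ^ 2 ≤ z (n + 1))
    (hN : 0 ≤ z N) (m : ℕ) : z N ^ 2 ^ m ≤ z (N + m) := by
  induction m with
  | zero => simp
  | succ m ih =>
    calc z N ^ 2 ^ (m + 1) = (z N ^ 2 ^ m) ^ 2 := by rw [pow_succ, pow_mul]
      _ ≤ z (N + m) ^ 2 := by gcongr
      _ ≤ z (N + (m + 1)) := hz (N + m)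

/-- For `M(a,b;l)`, this map sends the ratio of the numbers of `n`-blocks rooted at a label of the
`E_a` block and at a label of the `E_b` block to the same ratio for `n + 1`. -/
noncomputable def ratioMap (a b l : ℝ) (x : ℝ) : ℝ := ((a * x + l) / b) ^ 2

section RatioMap

variable {a b l : ℝ}

lemma iterate_ratioMap_nonneg {x : ℝ} (hx : 0 ≤ x) (n : ℕ) : 0 ≤ (ratioMap a b l)^[n] x := by
  cases n with
  | zero => exact hx
  | succ n => rw [Function.iterate_succ_apply']; exact sq_nonneg _

lemma ratioMap_le_ratioMap (ha : 0 ≤ a) (hl : 0 ≤ l) {x y : ℝ} (hx : 0 ≤ x) (hxy : x ≤ y) :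
    ratioMap a b l x ≤ ratioMap a b l y := by
  unfold ratioMap
  rw [div_pow, div_pow]
  gcongr

lemma iterate_ratioMap_le (ha : 0 ≤ a) (hl : 0 ≤ l) {x X : ℝ} (hx : 0 ≤ x) (hxX : x ≤ X)
    (hX : ratioMap a b l X ≤ X) (n : ℕ) : (ratioMap a b l)^[n] x ≤ X := by
  induction n with
  | zero => exact hxX
  | succ n ih =>
    rw [Function.iterate_succ_apply']
    exact (ratioMap_le_ratioMap ha hl (iterate_ratioMap_nonneg hx n) ih).trans hX

lemma sq_mul_le_mul_ratioMap (ha : 0 ≤ a) (hl : 0 ≤ l) {x : ℝ} (hx : 0 ≤ x) :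
    ((a / b) ^ 2 * x) ^ 2 ≤ (a / b) ^ 2 * ratioMap a b l x := by
  unfold ratioMap
  have : (a / b) ^ 2 * x ^ 2 ≤ ((a * x + l) / b) ^ 2 := by
    rw [← mul_pow, div_mul_eq_mul_div, div_pow, div_pow]
    gcongr
    linarith [mul_nonneg ha hx]
  calc ((a / b) ^ 2 * x) ^ 2 = (a / b) ^ 2 * ((a / b) ^ 2 * x ^ 2) := by ring
    _ ≤ _ := by gcongr

lemma exists_add_le_ratioMap_of_sq_lt (ha : 0 < a) (hb : b ≠ 0) (h : b ^ 2 < 4 * a * l) :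
    ∃ δ > 0, ∀ x, x + δ ≤ ratioMap a b l x := by
  refine ⟨(4 * a * l - b ^ 2) / (4 * a ^ 2), by apply div_pos <;> nlinarith, fun x => ?_⟩
  unfold ratioMap
  have hb2 : 0 < b ^ 2 := pow_two_pos_of_ne_zero hb
  rw [div_pow, le_div_iff₀ hb2]
  -- `(a x + l)² - b² (x + δ)` is a perfect square.
  have hsquare : (a * x + (2 * a * l - b ^ 2) / (2 * a)) ^ 2 =
      (a * x + l) ^ 2 - (x + (4 * a * l - b ^ 2) / (4 * a ^ 2)) * b ^ 2 := by
    field_simp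
    ring
  nlinarith [sq_nonneg (a * x + (2 * a * l - b ^ 2) / (2 * a))]

lemma exists_add_le_ratioMap_of_lt_add_of_sq_lt (hb : 0 < b) (h₁ : b < a + l)
    (h₂ : b ^ 2 < 2 * a * l + 2 * a ^ 2) : ∃ δ > 0, ∀ x, 1 ≤ x → x + δ ≤ ratioMap a b l x := by
  refine ⟨ratioMap a b l 1 - 1, ?_, fun x hx => ?_⟩
  · unfold ratioMap
    rw [gt_iff_lt, sub_pos, mul_one, one_lt_sq_iff₀ (div_pos (by linarith) hb).le, one_lt_div hb]
    linarith
  · unfold ratioMap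
    rw [div_pow, div_pow, mul_one]
    have hb2 : 0 < b ^ 2 := by positivity
    -- `(a x + l)² - b² x - ((a + l)² - b²) = (x - 1) (a² (x + 1) + 2 a l - b²)`
    have hfactor : 0 ≤ (x - 1) * (a ^ 2 * (x + 1) + 2 * a * l - b ^ 2) :=
      mul_nonneg (sub_nonneg.2 hx) (by nlinarith [mul_nonneg (sub_nonneg.2 hx) (sq_nonneg a)])
    rw [div_sub_one hb2.ne', le_div_iff₀ hb2]
    have hδ : (x + ((a + l) ^ 2 - b ^ 2) / b ^ 2) * b ^ 2 = (a + l) ^ 2 - b ^ 2 + x * b ^ 2 := by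
      field_simp; ring
    nlinarith

lemma exists_ratioMap_le_of_le_sq (ha : 0 < a) (hb : b ≠ 0) (h₁ : 4 * a * l ≤ b ^ 2)
    (h₂ : 2 * a * l + 2 * a ^ 2 ≤ b ^ 2) : ∃ X, 1 ≤ X ∧ ratioMap a b l X ≤ X := by
  have ha2 : 0 < 2 * a ^ 2 := by positivity
  refine ⟨(b ^ 2 - 2 * a * l) / (2 * a ^ 2), by rw [le_div_iff₀ ha2]; linarith, ?_⟩
  have hvertex : a * ((b ^ 2 - 2 * a * l) / (2 * a ^ 2)) + l = b ^ 2 / (2 * a) := by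
    field_simp; ring
  unfold ratioMap
  rw [hvertex, div_div, div_pow, div_le_div_iff₀ (by positivity) ha2]
  nlinarith [sq_nonneg b, mul_le_mul_of_nonneg_left h₁ (sq_nonneg b)]

end RatioMap

lemma Fin.sum_ite_val_lt {R : Type*} [Semiring R] {a b : ℕ} (s t : R) :
    ∑ j : Fin (a + b), (if (j : ℕ) < a then s else t) = a * s + b * t := by
  simp [Fin.sum_univ_add]

namespace IsMabl

variable {a b l : ℕ} {M : Matrix (Fin (a + b)) (Fin (a + b)) ℕ}

lemma sum_mul_ite (hM : IsMabl a b l M) (i : Fin (a + b)) (s t : ℝ) :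
    ∑ j, (M i j : ℝ) * (if (j : ℕ) < a then s else t) =
      if (i : ℕ) < a then a * s + l * t else b * t := by
  obtain ⟨-, hTop, hBot, hZero, hRow⟩ := hM
  rw [Fin.sum_univ_add]
  split_ifs with hi
  · have hl := hRow i hi
    simp [Fin.sum_univ_add] at hl
    simp [hTop i _ hi, ← Finset.sum_mul, ← hl]
  · simp [hZero i _ (not_lt.1 hi), hBot i _ (not_lt.1 hi)]

lemma treeP_eq (hM : IsMabl a b l M) (hb : b ≠ 0) (n : ℕ) (i : Fin (a + b)) :
    (treeP 2 M n i : ℝ) =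
      (b : ℝ) ^ (deltaCard 2 n - 1) * if (i : ℕ) < a then (ratioMap a b l)^[n] 1 else 1 := by
  induction n generalizing i with
  | zero => simp [treeP, deltaCard]
  | succ n ih =>
    obtain ⟨D, hD⟩ := Nat.exists_eq_add_one_of_ne_zero (deltaCard_pos 2 n).ne'
    have hb' : (b : ℝ) ≠ 0 := by exact_mod_cast hb
    simp only [treeP, Nat.cast_pow, Nat.cast_sum, Nat.cast_mul, ih, hD, Nat.add_sub_cancel,
      mul_left_comm _ ((b : ℝ) ^ D), ← Finset.mul_sum, hM.sum_mul_ite, deltaCard_succ,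
      Function.iterate_succ_apply', ratioMap]
    split_ifs
    · field_simp
      ring
    · ring

lemma sum_treeP_eq (hM : IsMabl a b l M) (hb : b ≠ 0) (n : ℕ) :
    ∑ i, (treeP 2 M n i : ℝ) = (b : ℝ) ^ deltaCard 2 n * (1 + a * (ratioMap a b l)^[n] 1 / b) := by
  obtain ⟨D, hD⟩ := Nat.exists_eq_add_one_of_ne_zero (deltaCard_pos 2 n).ne'
  have hb' : (b : ℝ) ≠ 0 := by exact_mod_cast hb
  simp_rw [hM.treeP_eq hb, ← Finset.mul_sum, Fin.sum_ite_val_lt, hD, Nat.add_sub_cancel]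
  field_simp
  ring

lemma log_sum_treeP_div_eq (hM : IsMabl a b l M) (hb : 0 < b) (n : ℕ) :
    Real.log (∑ i, (treeP 2 M n i : ℝ)) / deltaCard 2 n =
      Real.log b + Real.log (1 + a * (ratioMap a b l)^[n] 1 / b) / deltaCard 2 n := by
  have hD : (deltaCard 2 n : ℝ) ≠ 0 := by have := deltaCard_pos 2 n; positivity
  have hx := iterate_ratioMap_nonneg (a := (a : ℝ)) (b := b) (l := l) zero_le_one n
  rw [hM.sum_treeP_eq hb.ne', Real.log_mul (by positivity) (by positivity), Real.log_pow]
  field_simp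

theorem treeEntropy_eq_log_of_bddAbove (hM : IsMabl a b l M) (hb : 0 < b)
    (hx : BddAbove (Set.range fun n => (ratioMap a b l)^[n] 1)) :
    treeEntropy 2 M = Real.log b := by
  obtain ⟨X, hX⟩ := hx
  rw [mem_upperBounds, Set.forall_mem_range] at hX
  have hone : ∀ n, 1 ≤ 1 + a * (ratioMap a b l)^[n] 1 / b := fun n => by
    have := iterate_ratioMap_nonneg (a := (a : ℝ)) (b := b) (l := l) zero_le_one n
    simp only [le_add_iff_nonneg_right]
    positivity
  have hlog : Tendsto (fun n => Real.log (1 + a * (ratioMap a b l)^[n] 1 / b) / deltaCard 2 n)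
      atTop (𝓝 0) :=
    squeeze_zero (fun n => div_nonneg (Real.log_nonneg (hone n)) (Nat.cast_nonneg _))
      (fun n => div_le_div_of_nonneg_right (Real.log_le_log (y := 1 + a * X / b)
        (by linarith [hone n]) (by gcongr; exact hX n)) (Nat.cast_nonneg _))
      (tendsto_const_nhds.div_atTop (tendsto_deltaCard one_le_two))
  unfold treeEntropy
  simp_rw [hM.log_sum_treeP_div_eq hb]
  simpa using (tendsto_const_nhds.add hlog).limsup_eq

theorem log_lt_treeEntropy_of_not_bddAbove (hM : IsMabl a b l M) (ha : 0 < a) (hab : a ≤ b)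
    (hx : ¬BddAbove (Set.range fun n => (ratioMap a b l)^[n] 1)) :
    Real.log b < treeEntropy 2 M := by
  have hb : 0 < b := ha.trans_le hab
  have ha' : (0 : ℝ) < a := by exact_mod_cast ha
  have hb' : (0 : ℝ) < b := by exact_mod_cast hb
  have hx0 : ∀ n, 0 ≤ (ratioMap a b l)^[n] 1 := iterate_ratioMap_nonneg zero_le_one
  set z : ℕ → ℝ := fun n => ((a : ℝ) / b) ^ 2 * (ratioMap a b l)^[n] 1 with hz_def
  have hz : ∀ n, z n ^ 2 ≤ z (n + 1) := fun n => by
    simp only [hz_def, Function.iterate_succ_apply']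
    exact sq_mul_le_mul_ratioMap ha'.le (Nat.cast_nonneg _) (hx0 n)
  obtain ⟨N, hN⟩ : ∃ N, 1 < z N := by
    obtain ⟨_, ⟨N, rfl⟩, hN⟩ := not_bddAbove_iff.1 hx (((b : ℝ) / a) ^ 2)
    refine ⟨N, ?_⟩
    calc (1 : ℝ) = ((a : ℝ) / b) ^ 2 * ((b : ℝ) / a) ^ 2 := by field_simp
      _ < z N := by simp only [hz_def]; gcongr
  have hab' : (a : ℝ) / b ≤ 1 := (div_le_one hb').2 (by exact_mod_cast hab)
  set c := Real.log (z N) / 2 ^ (N + 1) with hc_def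
  have hc : 0 < c := div_pos (Real.log_pos hN) (by positivity)
  have hev : ∀ n ≥ N, Real.log b + c ≤
      Real.log (∑ i, (treeP 2 M n i : ℝ)) / deltaCard 2 n := by
    intro n hn
    obtain ⟨m, rfl⟩ := Nat.exists_eq_add_of_le hn
    have hpow := pow_two_pow_le_of_sq_le_succ hz (zero_le_one.trans hN.le) m
    have hpos : 0 < z N ^ 2 ^ m := pow_pos (zero_lt_one.trans hN) _
    have hD : (deltaCard 2 (N + m) : ℝ) ≤ 2 ^ (N + 1) * 2 ^ m := by
      have := deltaCard_two_add_one (N + m)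
      rw [← pow_add, ← add_right_comm]
      exact_mod_cast (Nat.le_succ _).trans this.le
    have hzle : z (N + m) ≤ 1 + a * (ratioMap a b l)^[N + m] 1 / b := by
      have := hx0 (N + m)
      calc z (N + m) = (a / b) * (a * (ratioMap a b l)^[N + m] 1 / b) := by
            simp only [hz_def]; ring
        _ ≤ a * (ratioMap a b l)^[N + m] 1 / b := mul_le_of_le_one_left (by positivity) hab'
        _ ≤ _ := le_add_of_nonneg_left zero_le_one
    rw [hM.log_sum_treeP_div_eq hb, add_le_add_iff_left,
      le_div_iff₀ (by have := deltaCard_pos 2 (N + m); positivity)]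
    calc c * deltaCard 2 (N + m) ≤ c * (2 ^ (N + 1) * 2 ^ m) := by gcongr
      _ = 2 ^ m * Real.log (z N) := by rw [hc_def]; field_simp
      _ = Real.log (z N ^ 2 ^ m) := by rw [Real.log_pow]; norm_num
      _ ≤ Real.log (z (N + m)) := Real.log_le_log hpos hpow
      _ ≤ _ := Real.log_le_log (hpos.trans_le hpow) hzle
  exact (lt_add_of_pos_right _ hc).trans_le <| le_limsup_of_frequently_le
    (eventually_atTop.2 ⟨N, hev⟩).frequently (isBoundedUnder_le_log_sum_treeP_div hM.1)

end IsMabl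

theorem treeEntropy_Mabl_classification_two_general {a b l : ℕ}
    (ha : 1 ≤ a) (hab : a < b) (hsum : b < a + l)
    (M : Matrix (Fin (a + b)) (Fin (a + b)) ℕ) (hM : IsMabl a b l M) :
    (b ^ 2 < 4 * a * l → treeEntropy 2 M > Real.log b) ∧
    (4 * a * l < b ^ 2 → b ^ 2 < 2 * a * l + 2 * a ^ 2 →
      treeEntropy 2 M > Real.log b) ∧
    (4 * a * l < b ^ 2 → 2 * a * l + 2 * a ^ 2 ≤ b ^ 2 →
      treeEntropy 2 M = Real.log b) ∧
    (b ^ 2 = 4 * a * l → a ≤ l → treeEntropy 2 M = Real.log b) ∧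
    (b ^ 2 = 4 * a * l → l < a → treeEntropy 2 M > Real.log b) := by
  have ha' : (0 : ℝ) < a := by exact_mod_cast ha
  have hb' : (0 : ℝ) < b := by exact_mod_cast (by omega : 0 < b)
  have hsum' : (b : ℝ) < a + l := by exact_mod_cast hsum
  have strict : (∃ δ > 0, ∀ x : ℝ, 1 ≤ x → x + δ ≤ ratioMap a b l x) →
      treeEntropy 2 M > Real.log b := fun ⟨δ, hδ, hstep⟩ =>
    hM.log_lt_treeEntropy_of_not_bddAbove ha hab.le (not_bddAbove_range_iterate hδ hstep)
  have equal : 4 * (a : ℝ) * l ≤ (b : ℝ) ^ 2 → 2 * (a : ℝ) * l + 2 * (a : ℝ) ^ 2 ≤ (b : ℝ) ^ 2 →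
      treeEntropy 2 M = Real.log b := fun h₁ h₂ => by
    obtain ⟨X, hX1, hX⟩ := exists_ratioMap_le_of_le_sq ha' hb'.ne' h₁ h₂
    refine hM.treeEntropy_eq_log_of_bddAbove (by omega) ⟨X, ?_⟩
    rintro _ ⟨n, rfl⟩
    exact iterate_ratioMap_le (Nat.cast_nonneg _) (Nat.cast_nonneg _) zero_le_one hX1 hX n
  refine ⟨fun h => strict ?_, fun _ h => strict ?_, fun h₁ h₂ => equal ?_ ?_,
    fun h₁ h₂ => equal ?_ ?_, fun h₁ h₂ => strict ?_⟩
  · obtain ⟨δ, hδ, hstep⟩ :=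
      exists_add_le_ratioMap_of_sq_lt (l := l) ha' hb'.ne' (by exact_mod_cast h)
    exact ⟨δ, hδ, fun x _ => hstep x⟩
  · exact exists_add_le_ratioMap_of_lt_add_of_sq_lt hb' hsum' (by exact_mod_cast h)
  · exact_mod_cast h₁.le
  · exact_mod_cast h₂
  · exact_mod_cast h₁.ge
  · exact_mod_cast (by nlinarith : 2 * a * l + 2 * a ^ 2 ≤ b ^ 2)
  · exact exists_add_le_ratioMap_of_lt_add_of_sq_lt hb' hsum'
      (by exact_mod_cast (by nlinarith : b ^ 2 < 2 * a * l + 2 * a ^ 2))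

/-- **Theorem 3.3.** Complete classification for `d = 2`, `b > a ≥ 1`, `0 < l ≤ b`,
`a + l > b`, in terms of the signs of `b² − 4al` and `b² − 2al − 2a²`. -/
theorem treeEntropy_Mabl_classification_two {a b l : ℕ}
    (ha : 1 ≤ a) (hab : a < b) (hl : 0 < l) (hlb : l ≤ b) (hsum : b < a + l)
    (M : Matrix (Fin (a + b)) (Fin (a + b)) ℕ) (hM : IsMabl a b l M) :
    (b ^ 2 < 4 * a * l → treeEntropy 2 M > Real.log b) ∧
    (4 * a * l < b ^ 2 → b ^ 2 < 2 * a * l + 2 * a ^ 2 →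
      treeEntropy 2 M > Real.log b) ∧
    (4 * a * l < b ^ 2 → 2 * a * l + 2 * a ^ 2 ≤ b ^ 2 →
      treeEntropy 2 M = Real.log b) ∧
    (b ^ 2 = 4 * a * l → a ≤ l → treeEntropy 2 M = Real.log b) ∧
    (b ^ 2 = 4 * a * l → l < a → treeEntropy 2 M > Real.log b) :=
  treeEntropy_Mabl_classification_two_general ha hab hsum M hM
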